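/- arXiv:1903.06976 — 2 statements merged into one kernel-verified Lean document; each statement's English description precedes it below -/
import Mathlib

section
/- Let g: [a,b] → ℝ be a function of finite q-bounded variation, meaning var_q(g) := sup ( Σ_{k} |g(x_{k+1}) − g(x_k)|^q )^{1/q} < ∞, where the sup is over finite increasing sequences a ≤ x₀ < x₁ < ⋯ < x_n ≤ b. Then for every ε > 0 there is a finite partition of [a,b] into intervals J₁, …, J_N such that var_q(g restricted to the interior of J_i) < ε for each i. -/
open scoped ENNReal

/-- The `q`-variation of `g` over a set `S ⊆ ℝ`: the supremum, over finite increasing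
sequences of points of `S`, of `(Σ |g(x_{k+1}) - g(x_k)|^q)^(1/q)`. -/
noncomputable def varq (q : ℝ) (g : ℝ → ℝ) (S : Set ℝ) : ℝ≥0∞ :=
  ⨆ (n : ℕ) (x : Fin (n + 1) → ℝ) (_ : StrictMono x) (_ : ∀ k, x k ∈ S),
    (∑ k : Fin n, ENNReal.ofReal (|g (x k.succ) - g (x k.castSucc)| ^ q)) ^ (1 / q)

/-!
Work with `W(S) = varq q g S ^ q`, the supremum of the sums `Σ |g(x_{k+1}) - g(x_k)|^q`
themselves. Appending an increasing sequence to the right of another only adds terms, so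
`W(S₁) + W(S₂) ≤ W(S₁ ∪ S₂)` when `S₁` lies to the left of `S₂`. Consequently
`F x = W([a, x])` is monotone, finite on `[a, b]`, and `W((c, d))` is at most the oscillation
of `F` on `(c, d)`. Cutting `[a, b]` at the points where `F` first reaches the levels `k δ`
leaves finitely many open intervals on each of which `F` oscillates by at most `δ`.
-/

open Set

noncomputable def varqSum (q : ℝ) (g : ℝ → ℝ) {n : ℕ} (x : Fin (n + 1) → ℝ) : ℝ≥0∞ :=
  ∑ k : Fin n, ENNReal.ofReal (|g (x k.succ) - g (x k.castSucc)| ^ q)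

noncomputable def varqPow (q : ℝ) (g : ℝ → ℝ) (S : Set ℝ) : ℝ≥0∞ :=
  ⨆ (n : ℕ) (x : Fin (n + 1) → ℝ) (_ : StrictMono x) (_ : ∀ k, x k ∈ S), varqSum q g x

theorem Fin.strictMono_append {α : Type*} [Preorder α] {m n : ℕ} {u : Fin m → α}
    {v : Fin n → α} (hu : StrictMono u) (hv : StrictMono v) (huv : ∀ i j, u i < v j) :
    StrictMono (Fin.append u v) := by
  intro i j hij
  cases i using Fin.addCases with
  | left i =>
    cases j using Fin.addCases with
    | left j => simpa using hu ((Fin.strictMono_castAdd n).lt_iff_lt.1 hij)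
    | right j => simpa using huv i j
  | right i =>
    cases j using Fin.addCases with
    | left j => simp only [Fin.lt_def, Fin.val_castAdd, Fin.val_natAdd] at hij; omega
    | right j => simpa using hv ((Fin.natAdd_lt_natAdd_iff _).1 hij)

section varqPow

variable {q : ℝ} {g : ℝ → ℝ}

theorem varq_eq_varqPow_rpow (hq : 0 < q) (S : Set ℝ) :
    varq q g S = varqPow q g S ^ (1 / q) := by
  have h := fun y => (ENNReal.orderIsoRpow_apply (1 / q) (one_div_pos.2 hq) y).symm
  simp only [varq, varqPow, varqSum, h, OrderIso.map_iSup]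

theorem varqSum_ne_top {n : ℕ} (x : Fin (n + 1) → ℝ) : varqSum q g x ≠ ∞ := by
  simp [varqSum]

theorem varqSum_le_varqPow {S : Set ℝ} {n : ℕ} {x : Fin (n + 1) → ℝ} (hx : StrictMono x)
    (hS : ∀ k, x k ∈ S) : varqSum q g x ≤ varqPow q g S :=
  le_iSup_of_le n <| le_iSup_of_le x <| le_iSup_of_le hx <| le_iSup_of_le hS le_rfl

theorem varqPow_mono {S T : Set ℝ} (h : S ⊆ T) : varqPow q g S ≤ varqPow q g T :=
  iSup_mono fun _ => iSup_mono fun _ => iSup_mono fun _ => iSup_le fun hS =>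
    le_iSup_of_le (fun k => h (hS k)) le_rfl

theorem varqSum_add_le_varqSum_append {n m : ℕ} (x : Fin (n + 1) → ℝ) (y : Fin (m + 1) → ℝ) :
    varqSum q g x + varqSum q g y ≤
      varqSum q g (n := n + 1 + m) (Fin.append x y : Fin (n + 1 + (m + 1)) → ℝ) := by
  simp only [varqSum]
  have hx : ∀ i : Fin n, (Fin.append x y : Fin (n + 1 + (m + 1)) → ℝ)
      (Fin.castAdd m i.castSucc).succ = x i.succ := fun i => Fin.append_left x y i.succ
  have hx' : ∀ i : Fin n, (Fin.append x y : Fin (n + 1 + (m + 1)) → ℝ)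
      (Fin.castAdd m i.castSucc).castSucc = x i.castSucc := fun i => Fin.append_left x y i.castSucc
  have hy : ∀ j : Fin m, (Fin.append x y : Fin (n + 1 + (m + 1)) → ℝ)
      (Fin.natAdd (n + 1) j).succ = y j.succ := fun j => Fin.append_right x y j.succ
  have hy' : ∀ j : Fin m, (Fin.append x y : Fin (n + 1 + (m + 1)) → ℝ)
      (Fin.natAdd (n + 1) j).castSucc = y j.castSucc := fun j => Fin.append_right x y j.castSucc
  rw [Fin.sum_univ_add, Fin.sum_univ_castSucc]
  simp only [hx, hx', hy, hy']
  exact add_le_add_left le_self_add _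

theorem varqPow_add_varqSum_le {S : Set ℝ} {m : ℕ} {y : Fin (m + 1) → ℝ} (hy : StrictMono y)
    (hsep : ∀ u ∈ S, ∀ k, u < y k) :
    varqPow q g S + varqSum q g y ≤ varqPow q g (S ∪ range y) := by
  have hy_le : varqSum q g y ≤ varqPow q g (S ∪ range y) :=
    varqSum_le_varqPow hy fun k => mem_union_right S (mem_range_self k)
  rw [← ENNReal.le_sub_iff_add_le_right (varqSum_ne_top y) hy_le]
  refine iSup_le fun n => iSup_le fun x => iSup_le fun hx => iSup_le fun hS => ?_
  rw [ENNReal.le_sub_iff_add_le_right (varqSum_ne_top y) hy_le]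
  refine (varqSum_add_le_varqSum_append x y).trans <|
    varqSum_le_varqPow (Fin.strictMono_append hx hy fun i j => hsep _ (hS i) j) fun k => ?_
  change Fin (n + 1 + (m + 1)) at k
  cases k using Fin.addCases with
  | left i => simp [hS i]
  | right j => simp

theorem varqPow_Ioo_le {a c d : ℝ} {L δ : ℝ≥0∞} (hac : a ≤ c) (hL : L ≠ ∞)
    (hlow : ∀ x ∈ Ioo c d, L ≤ varqPow q g (Icc a x))
    (hup : ∀ x ∈ Ioo c d, varqPow q g (Icc a x) ≤ L + δ) :
    varqPow q g (Ioo c d) ≤ δ := by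
  refine iSup_le fun n => iSup_le fun x => iSup_le fun hx => iSup_le fun hS => ?_
  obtain ⟨c', hcc', hc'x⟩ := exists_between (hS 0).1
  have hxc' : ∀ k, c' < x k := fun k => hc'x.trans_le (hx.monotone (Fin.zero_le k))
  have hsub : Icc a c' ∪ range x ⊆ Icc a (x (Fin.last n)) := by
    rintro u (hu | ⟨k, rfl⟩)
    · exact ⟨hu.1, hu.2.trans (hxc' _).le⟩
    · exact ⟨hac.trans (hS k).1.le, hx.monotone (Fin.le_last k)⟩
  refine (ENNReal.add_le_add_iff_left hL).1 ?_
  calc L + varqSum q g x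
      ≤ varqPow q g (Icc a c') + varqSum q g x :=
        add_le_add_left (hlow c' ⟨hcc', (hxc' _).trans (hS (Fin.last n)).2⟩) _
    _ ≤ varqPow q g (Icc a c' ∪ range x) :=
        varqPow_add_varqSum_le hx fun u hu k => hu.2.trans_lt (hxc' k)
    _ ≤ varqPow q g (Icc a (x (Fin.last n))) := varqPow_mono hsub
    _ ≤ L + δ := hup _ (hS _)

end varqPow

/-- Inserting `b` makes the crossing `b` when `F` stays below `y` on `[a, b]`, instead of the
junk value `sInf ∅ = 0`. -/
noncomputable def levelCrossing (F : ℝ → ℝ≥0∞) (a b : ℝ) (y : ℝ≥0∞) : ℝ :=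
  sInf (insert b {x ∈ Icc a b | y ≤ F x})

section levelCrossing

variable {F : ℝ → ℝ≥0∞} {a b : ℝ}

theorem bddBelow_levelCrossing_set (hab : a ≤ b) (y : ℝ≥0∞) :
    BddBelow (insert b {x ∈ Icc a b | y ≤ F x}) :=
  ⟨a, forall_mem_insert.2 ⟨hab, fun _ hx => hx.1.1⟩⟩

theorem levelCrossing_mem_Icc (hab : a ≤ b) (y : ℝ≥0∞) : levelCrossing F a b y ∈ Icc a b :=
  ⟨le_csInf (insert_nonempty _ _) (forall_mem_insert.2 ⟨hab, fun _ hx => hx.1.1⟩),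
    csInf_le (bddBelow_levelCrossing_set hab y) (mem_insert _ _)⟩

theorem levelCrossing_mono (hab : a ≤ b) : Monotone (levelCrossing F a b) := fun _ _ h =>
  csInf_le_csInf (bddBelow_levelCrossing_set hab _) (insert_nonempty _ _)
    (insert_subset_insert fun _ hx => ⟨hx.1, h.trans hx.2⟩)

theorem levelCrossing_zero (hab : a ≤ b) : levelCrossing F a b 0 = a :=
  IsLeast.csInf_eq ⟨mem_insert_of_mem _ ⟨left_mem_Icc.2 hab, zero_le⟩,
    forall_mem_insert.2 ⟨hab, fun _ hx => hx.1.1⟩⟩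

theorem levelCrossing_of_lt (hF : Monotone F) {y : ℝ≥0∞} (hy : F b < y) :
    levelCrossing F a b y = b := by
  have hempty : {x ∈ Icc a b | y ≤ F x} = ∅ :=
    eq_empty_of_forall_notMem fun x hx => (hF hx.1.2).not_gt (hy.trans_le hx.2)
  rw [levelCrossing, hempty, insert_empty_eq, csInf_singleton]

theorem lt_of_lt_levelCrossing (hab : a ≤ b) {x : ℝ} {y : ℝ≥0∞} (hx : x ∈ Icc a b)
    (h : x < levelCrossing F a b y) : F x < y := by
  by_contra! hy
  exact h.not_ge (csInf_le (bddBelow_levelCrossing_set hab y) (mem_insert_of_mem _ ⟨hx, hy⟩))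

theorem le_of_levelCrossing_lt (hF : Monotone F) {x : ℝ} {y : ℝ≥0∞} (hxb : x ≤ b)
    (h : levelCrossing F a b y < x) : y ≤ F x := by
  obtain ⟨z, hz, hzx⟩ := exists_lt_of_csInf_lt (insert_nonempty _ _) h
  rcases hz with rfl | hz
  · exact absurd hxb hzx.not_ge
  · exact hz.2.trans (hF hzx.le)

end levelCrossing

theorem Monotone.exists_partition_levels {F : ℝ → ℝ≥0∞} (hF : Monotone F) {a b : ℝ}
    (hab : a ≤ b) (hb : F b ≠ ∞) {δ : ℝ≥0∞} (hδ : δ ≠ 0) :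
    ∃ (N : ℕ) (t : Fin (N + 1) → ℝ), Monotone t ∧ t 0 = a ∧ t (Fin.last N) = b ∧
      ∀ i : Fin N, ∀ x ∈ Ioo (t i.castSucc) (t i.succ), i * δ ≤ F x ∧ F x < (i + 1) * δ := by
  obtain ⟨N, hN⟩ := ENNReal.exists_nat_mul_gt hδ hb
  refine ⟨N, fun i => levelCrossing F a b (i * δ), fun i j h => ?_, ?_, ?_, fun i x hx => ?_⟩
  · exact levelCrossing_mono hab (mul_le_mul_left (Nat.cast_le.2 h) δ)
  · simpa using levelCrossing_zero hab
  · simpa using levelCrossing_of_lt hF hN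
  · have hxb : x ≤ b := hx.2.le.trans (levelCrossing_mem_Icc hab _).2
    have hax : a ≤ x := (levelCrossing_mem_Icc hab _).1.trans hx.1.le
    constructor
    · simpa using le_of_levelCrossing_lt hF hxb hx.1
    · simpa using lt_of_lt_levelCrossing hab ⟨hax, hxb⟩ hx.2

/-- A function of finite `q`-bounded variation on `[a,b]` admits, for every `ε > 0`,
a finite partition of `[a,b]` into intervals on whose interiors the `q`-variation
is `< ε`. -/
theorem stmt7 (q : ℝ) (hq : 1 ≤ q) (a b : ℝ) (hab : a < b) (g : ℝ → ℝ)
    (hfin : varq q g (Set.Icc a b) < ⊤) :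
    ∀ ε > (0:ℝ), ∃ (N : ℕ) (t : Fin (N + 1) → ℝ),
      Monotone t ∧ t 0 = a ∧ t (Fin.last N) = b ∧
      ∀ i : Fin N, varq q g (Set.Ioo (t i.castSucc) (t i.succ)) < ENNReal.ofReal ε := by
  intro ε hε
  have hq0 : 0 < q := by linarith
  have hεq : ENNReal.ofReal (ε ^ q) ≠ 0 := by simp [Real.rpow_pos_of_pos hε]
  set δ := ENNReal.ofReal (ε ^ q) / 2
  have hδ : δ ≠ ∞ := (ENNReal.div_lt_top ENNReal.ofReal_ne_top two_ne_zero).ne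
  have hF : Monotone fun x => varqPow q g (Icc a x) := fun _ _ h =>
    varqPow_mono (Icc_subset_Icc_right h)
  have hFb : varqPow q g (Icc a b) ≠ ∞ := by
    rw [varq_eq_varqPow_rpow hq0] at hfin
    exact (ENNReal.rpow_eq_top_iff_of_pos (by positivity)).not.1 hfin.ne
  obtain ⟨N, t, ht, ht0, htN, hlevel⟩ := hF.exists_partition_levels hab.le hFb
    (ENNReal.half_pos hεq).ne'
  refine ⟨N, t, ht, ht0, htN, fun i => ?_⟩
  have hW : varqPow q g (Ioo (t i.castSucc) (t i.succ)) ≤ δ :=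
    varqPow_Ioo_le (ht0 ▸ ht (Fin.zero_le _)) (ENNReal.mul_ne_top (by simp) hδ)
      (fun x hx => (hlevel i x hx).1) fun x hx => (hlevel i x hx).2.le.trans_eq (by ring)
  calc varq q g (Ioo (t i.castSucc) (t i.succ)) ≤ δ ^ (1 / q) := by
        rw [varq_eq_varqPow_rpow hq0]; gcongr
    _ < ENNReal.ofReal (ε ^ q) ^ (1 / q) :=
        ENNReal.rpow_lt_rpow (ENNReal.half_lt_self hεq ENNReal.ofReal_ne_top) (by positivity)
    _ = ENNReal.ofReal ε := by
        rw [ENNReal.ofReal_rpow_of_pos (by positivity), ← Real.rpow_mul hε.le,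
          mul_one_div_cancel hq0.ne', Real.rpow_one]
end

section
/- Let α: [0,1] → ℝ be defined by α(x) = sin(2π · log(x)/log(2)) for x ∈ (0, 1/2] and α(x) = 0 elsewhere, and let p > 1. For each dyadic interval Q of level k (i.e., Q = [j 2^{-k}, (j+1)2^{-k}]) contained in [2^{-(i+1)}, 2^{-i}] with i < k, define c_Q = inf_Q α₊ − inf_{Q'} α₊ where α₊ = max(α, 0) and Q' is the parent dyadic interval of Q. Then |c_Q| ≤ C · 2^i · |Q| for an absolute constant C, and consequently Σ_{Q ∈ D^k} |c_Q|^p ≤ C^p / (1 − 2^{1−p}) uniformly in k. -/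
/-- The potential `α(x) = sin(2π log x / log 2)` on `(0, 1/2]`, `0` elsewhere. -/
noncomputable def alphaFn : ℝ → ℝ := fun x =>
  if x ∈ Set.Ioc (0:ℝ) (1/2) then Real.sin (2 * Real.pi * Real.log x / Real.log 2) else 0

/-- Positive part of `alphaFn`. -/
noncomputable def alphaPlus : ℝ → ℝ := fun x => max (alphaFn x) 0

/-- The dyadic interval of generation `k` and index `j`. -/
def dyadic (k j : ℕ) : Set ℝ :=
  Set.Icc ((j : ℝ) * 2 ^ (-(k : ℤ))) (((j : ℝ) + 1) * 2 ^ (-(k : ℤ)))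

/-- `c_Q = inf_Q α₊ - inf_{Q'} α₊`, `Q'` the parent dyadic interval of `Q`. -/
noncomputable def cQ (k j : ℕ) : ℝ :=
  sInf (alphaPlus '' dyadic k j) - sInf (alphaPlus '' dyadic (k - 1) (j / 2))

/-!
On the octave `[2^{-(i+1)}, 2^{-i}]` the function `α₊` is Lipschitz with constant `≲ 2^i`,
because `(log x)' = 1/x ≤ 2^{i+1}` there. Hence `c_Q`, being at most the oscillation of `α₊` on
the parent `Q'`, is `≲ 2^i |Q'| = 2^{i+1} |Q|` as long as `Q'` stays in the octave; the only
dyadic interval whose parent leaves it is `Q = [2^{-k}, 2^{1-k}]` (`k = i + 1`), and there `Q` and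
`Q'` share the zero `2^{-k}` of `α₊`, so `c_Q = 0`.

For the sum, the `2^m` intervals `Q ∈ D^k` with index in `[2^m, 2^{m+1})` lie in the octave
`i = k - 1 - m`, so `|c_Q| ≲ 2^{-m}` and `Σ |c_Q|^p ≲ Σ_m 2^{m(1-p)}`, a geometric series.
-/

open Real Set

def octave (i : ℕ) : Set ℝ := Icc ((2:ℝ) ^ (-(i : ℤ) - 1)) ((2:ℝ) ^ (-(i : ℤ)))

lemma alphaPlus_nonneg (x : ℝ) : 0 ≤ alphaPlus x := le_max_right _ _

lemma alphaPlus_zero : alphaPlus 0 = 0 := by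
  simp [alphaPlus, alphaFn]

lemma alphaPlus_two_zpow (z : ℤ) : alphaPlus (2 ^ z) = 0 := by
  have hsin : sin (2 * π * log ((2:ℝ) ^ z) / log 2) = 0 := by
    rw [log_zpow, show 2 * π * (z * log 2) / log 2 = (2 * z : ℤ) * π by
      push_cast; field_simp]
    exact sin_int_mul_pi _
  unfold alphaPlus alphaFn
  split_ifs
  · rw [hsin, max_self]
  · exact max_self 0

lemma alphaPlus_eq_zero_of_half_le {x : ℝ} (hx : 1 / 2 ≤ x) : alphaPlus x = 0 := by
  by_cases hx' : x ∈ Ioc (0:ℝ) (1 / 2)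
  · rw [le_antisymm hx'.2 hx, show (1 / 2 : ℝ) = 2 ^ (-1 : ℤ) by norm_num]
    exact alphaPlus_two_zpow _
  · simp only [alphaPlus, alphaFn, if_neg hx', max_self]

lemma abs_log_sub_log_le {a x y : ℝ} (ha : 0 < a) (hx : a ≤ x) (hy : a ≤ y) :
    |log x - log y| ≤ |x - y| / a := by
  wlog hyx : y ≤ x generalizing x y
  · rw [abs_sub_comm, abs_sub_comm x y]; exact this hy hx (le_of_not_ge hyx)
  have hy0 : 0 < y := ha.trans_le hy
  rw [abs_of_nonneg (sub_nonneg.2 (log_le_log hy0 hyx)), abs_of_nonneg (sub_nonneg.2 hyx)]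
  calc log x - log y = log (x / y) := (log_div (hy0.trans_le hyx).ne' hy0.ne').symm
    _ ≤ x / y - 1 := log_le_sub_one_of_pos (div_pos (hy0.trans_le hyx) hy0)
    _ = (x - y) / y := by field_simp
    _ ≤ (x - y) / a := div_le_div_of_nonneg_left (sub_nonneg.2 hyx) ha hy

lemma two_pi_div_log_two_le : 2 * π / log 2 ≤ 10 := by
  have hpi := pi_lt_d2
  have hlog := log_two_gt_d9
  rw [div_le_iff₀ (log_pos one_lt_two)]
  linarith

lemma abs_alphaFn_sub_le {a x y : ℝ} (ha : 0 < a) (hx : x ∈ Icc a (1 / 2))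
    (hy : y ∈ Icc a (1 / 2)) : |alphaFn x - alphaFn y| ≤ 10 * |x - y| / a := by
  have hmem {z : ℝ} (hz : z ∈ Icc a (1 / 2)) : z ∈ Ioc (0:ℝ) (1 / 2) := ⟨ha.trans_le hz.1, hz.2⟩
  simp only [alphaFn, if_pos (hmem hx), if_pos (hmem hy)]
  calc _ ≤ |2 * π * log x / log 2 - 2 * π * log y / log 2| := abs_sin_sub_sin_le _ _
    _ = 2 * π / log 2 * |log x - log y| := by
      have hlog : 0 < log 2 := log_pos one_lt_two
      rw [← abs_of_pos (show 0 < 2 * π / log 2 by positivity), ← abs_mul]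
      ring_nf
    _ ≤ 10 * (|x - y| / a) :=
      mul_le_mul two_pi_div_log_two_le (abs_log_sub_log_le ha hx.1 hy.1) (abs_nonneg _)
        (by norm_num)
    _ = 10 * |x - y| / a := by ring

lemma abs_alphaPlus_sub_le {i : ℕ} {x y : ℝ} (hx : x ∈ octave i) (hy : y ∈ octave i) :
    |alphaPlus x - alphaPlus y| ≤ 20 * 2 ^ i * |x - y| := by
  rcases Nat.eq_zero_or_pos i with rfl | hi
  · have h0 {z : ℝ} (hz : z ∈ octave 0) : alphaPlus z = 0 :=
      alphaPlus_eq_zero_of_half_le (by simpa [octave] using hz.1)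
    rw [h0 hx, h0 hy, sub_zero, abs_zero]
    positivity
  · have hlow : (2:ℝ) ^ (-(i:ℤ) - 1) = (2 * 2 ^ i)⁻¹ := by
      rw [← zpow_natCast, ← zpow_one_add₀ two_ne_zero, ← zpow_neg]
      ring_nf
    have hhalf : (2:ℝ) ^ (-(i:ℤ)) ≤ 1 / 2 := by
      rw [show (1 / 2 : ℝ) = 2 ^ (-1 : ℤ) by norm_num]
      exact zpow_le_zpow_right₀ one_le_two (by omega)
    have hsub : octave i ⊆ Icc ((2 * 2 ^ i)⁻¹) (1 / 2) := by
      rw [octave, hlow]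
      exact Icc_subset_Icc_right hhalf
    calc |alphaPlus x - alphaPlus y| ≤ |alphaFn x - alphaFn y| := abs_max_sub_max_le_abs _ _ _
      _ ≤ 10 * |x - y| / (2 * 2 ^ i)⁻¹ := abs_alphaFn_sub_le (by positivity) (hsub hx) (hsub hy)
      _ = 20 * 2 ^ i * |x - y| := by field_simp; ring

lemma abs_sInf_image_sub_sInf_image_le {α : Type*} {f : α → ℝ} {Q P : Set α} {δ : ℝ}
    (hQP : Q ⊆ P) (hQ : Q.Nonempty) (hP : BddBelow (f '' P))
    (hosc : ∀ x ∈ P, ∀ y ∈ P, f x - f y ≤ δ) :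
    |sInf (f '' Q) - sInf (f '' P)| ≤ δ := by
  obtain ⟨x₀, hx₀⟩ := hQ
  have hmono : sInf (f '' P) ≤ sInf (f '' Q) :=
    csInf_le_csInf hP ⟨f x₀, x₀, hx₀, rfl⟩ (image_mono hQP)
  have hQx₀ : sInf (f '' Q) ≤ f x₀ := csInf_le (hP.mono (image_mono hQP)) ⟨x₀, hx₀, rfl⟩
  have hPx₀ : f x₀ - δ ≤ sInf (f '' P) := by
    refine le_csInf ⟨f x₀, x₀, hQP hx₀, rfl⟩ ?_
    rintro _ ⟨y, hy, rfl⟩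
    linarith [hosc x₀ (hQP hx₀) y hy]
  rw [abs_of_nonneg (sub_nonneg.2 hmono)]
  linarith

lemma sInf_image_alphaPlus_eq_zero {S : Set ℝ} {x : ℝ} (hx : x ∈ S) (h : alphaPlus x = 0) :
    sInf (alphaPlus '' S) = 0 :=
  IsLeast.csInf_eq ⟨⟨x, hx, h⟩, by rintro _ ⟨y, -, rfl⟩; exact alphaPlus_nonneg y⟩

lemma left_mem_dyadic (k j : ℕ) : (j : ℝ) * 2 ^ (-(k:ℤ)) ∈ dyadic k j :=
  left_mem_Icc.2 (by gcongr; linarith)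

lemma abs_sub_le_of_mem_dyadic {k j : ℕ} {x y : ℝ} (hx : x ∈ dyadic k j) (hy : y ∈ dyadic k j) :
    |x - y| ≤ 2 ^ (-(k:ℤ)) :=
  (abs_sub_le_of_le_of_le hx.1 hx.2 hy.1 hy.2).trans_eq (by ring)

lemma two_zpow_neg_succ (k : ℕ) : (2:ℝ) ^ (-(k:ℤ)) = 2 * 2 ^ (-((k + 1 : ℕ) : ℤ)) := by
  rw [← zpow_one_add₀ two_ne_zero]
  push_cast; ring_nf

lemma dyadic_succ_subset (k j : ℕ) : dyadic (k + 1) j ⊆ dyadic k (j / 2) := by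
  have hj₁ : ((j / 2 : ℕ) : ℝ) * 2 ≤ j := by exact_mod_cast Nat.div_mul_le_self j 2
  have hj₂ : (j : ℝ) + 1 ≤ (((j / 2 : ℕ) : ℝ) + 1) * 2 := by
    exact_mod_cast (by omega : j + 1 ≤ (j / 2 + 1) * 2)
  have hpos : (0:ℝ) < 2 ^ (-((k + 1 : ℕ) : ℤ)) := by positivity
  rw [dyadic, dyadic, two_zpow_neg_succ k]
  exact Icc_subset_Icc (by nlinarith) (by nlinarith)

lemma dyadic_subset_octave_iff {n i j : ℕ} :
    dyadic (n + i + 1) j ⊆ octave i ↔ 2 ^ n ≤ j ∧ j < 2 ^ (n + 1) := by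
  have hlow : (2:ℝ) ^ (-(i:ℤ) - 1) = 2 ^ n * 2 ^ (-((n + i + 1 : ℕ) : ℤ)) := by
    rw [← zpow_natCast, ← zpow_add₀ two_ne_zero]; push_cast; ring_nf
  have hhigh : (2:ℝ) ^ (-(i:ℤ)) = 2 ^ (n + 1) * 2 ^ (-((n + i + 1 : ℕ) : ℤ)) := by
    rw [← zpow_natCast, ← zpow_add₀ two_ne_zero]; push_cast; ring_nf
  have hpos : (0:ℝ) < 2 ^ (-((n + i + 1 : ℕ) : ℤ)) := by positivity
  rw [dyadic, octave, Icc_subset_Icc_iff (by gcongr; linarith), hlow, hhigh,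
    mul_le_mul_iff_left₀ hpos, mul_le_mul_iff_left₀ hpos, Nat.lt_iff_add_one_le]
  constructor <;> rintro ⟨h₁, h₂⟩ <;> exact ⟨by exact_mod_cast h₁, by exact_mod_cast h₂⟩

lemma cQ_eq_zero_of_mem {k j : ℕ} {x : ℝ} (hx : x ∈ dyadic (k + 1) j) (h : alphaPlus x = 0) :
    cQ (k + 1) j = 0 := by
  rw [cQ, Nat.add_sub_cancel, sInf_image_alphaPlus_eq_zero hx h,
    sInf_image_alphaPlus_eq_zero (dyadic_succ_subset k j hx) h, sub_zero]

lemma abs_cQ_le {k i j : ℕ} (hik : i < k) (hsub : dyadic k j ⊆ octave i) :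
    |cQ k j| ≤ 40 * 2 ^ i * 2 ^ (-(k:ℤ)) := by
  obtain ⟨n, rfl⟩ : ∃ n, k = n + i + 1 := ⟨k - i - 1, by omega⟩
  rw [dyadic_subset_octave_iff] at hsub
  cases n with
  | zero =>
    obtain rfl : j = 1 := by simp only [pow_zero, zero_add, pow_one] at hsub; omega
    have hmem := left_mem_dyadic (0 + i + 1) 1
    rw [Nat.cast_one, one_mul] at hmem
    rw [cQ_eq_zero_of_mem hmem (alphaPlus_two_zpow _), abs_zero]
    positivity
  | succ n =>
    have hparent : dyadic (n + i + 1) (j / 2) ⊆ octave i := by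
      rw [dyadic_subset_octave_iff, pow_succ]
      rw [pow_succ, pow_succ] at hsub
      omega
    rw [show n + 1 + i + 1 = n + i + 1 + 1 by ring, cQ, Nat.add_sub_cancel]
    calc _ ≤ (20:ℝ) * 2 ^ i * 2 ^ (-((n + i + 1 : ℕ) : ℤ)) := by
          refine abs_sInf_image_sub_sInf_image_le (dyadic_succ_subset _ j) ⟨_, left_mem_dyadic _ j⟩
            ⟨0, by rintro _ ⟨y, -, rfl⟩; exact alphaPlus_nonneg y⟩ fun x hx y hy => ?_
          calc alphaPlus x - alphaPlus y ≤ |alphaPlus x - alphaPlus y| := le_abs_self _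
            _ ≤ 20 * 2 ^ i * |x - y| := abs_alphaPlus_sub_le (hparent hx) (hparent hy)
            _ ≤ 20 * 2 ^ i * 2 ^ (-((n + i + 1 : ℕ) : ℤ)) := by
              gcongr; exact abs_sub_le_of_mem_dyadic hx hy
      _ = (40:ℝ) * 2 ^ i * 2 ^ (-((n + i + 1 + 1 : ℕ) : ℤ)) := by
        rw [two_zpow_neg_succ]; ring

lemma abs_cQ_le_div_two_pow_log {k j : ℕ} (hj : 0 < j) (hjk : j < 2 ^ k) :
    |cQ k j| ≤ 20 / 2 ^ Nat.log 2 j := by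
  set m := Nat.log 2 j
  have hmk : m < k := Nat.log_lt_of_lt_pow hj.ne' hjk
  obtain ⟨i, rfl⟩ : ∃ i, k = m + i + 1 := ⟨k - m - 1, by omega⟩
  have hsub : dyadic (m + i + 1) j ⊆ octave i :=
    dyadic_subset_octave_iff.2 ⟨Nat.pow_log_le_self 2 hj.ne', Nat.lt_pow_succ_log_self one_lt_two j⟩
  refine (abs_cQ_le (by omega) hsub).trans_eq ?_
  rw [zpow_neg, zpow_natCast]
  field_simp
  ring

lemma sum_Ico_one_two_pow_comp_log {M : Type*} [AddCommMonoid M] (f : ℕ → M) (k : ℕ) :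
    ∑ j ∈ Finset.Ico 1 (2 ^ k), f (Nat.log 2 j) = ∑ m ∈ Finset.range k, 2 ^ m • f m := by
  induction k with
  | zero => simp
  | succ k ih =>
    rw [← Finset.sum_Ico_consecutive _ Nat.one_le_two_pow (Nat.pow_le_pow_right two_pos k.le_succ),
      ih, Finset.sum_range_succ,
      Finset.sum_congr rfl fun j hj => congrArg f (Nat.log_eq_of_pow_le_of_lt_pow
        (Finset.mem_Ico.1 hj).1 (Finset.mem_Ico.1 hj).2),
      Finset.sum_const, Nat.card_Ico, pow_succ, Nat.mul_two, Nat.add_sub_cancel]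

lemma two_pow_mul_div_two_pow_rpow {c : ℝ} (hc : 0 ≤ c) (p : ℝ) (m : ℕ) :
    2 ^ m * (c / 2 ^ m) ^ p = c ^ p * (2 ^ (1 - p)) ^ m := by
  rw [div_rpow hc (by positivity), ← rpow_pow_comm zero_le_two, rpow_sub two_pos, rpow_one,
    div_pow]
  field_simp

lemma sum_abs_cQ_rpow_le {p : ℝ} (hp : 1 < p) {k : ℕ} (hk : 1 ≤ k) :
    ∑ j ∈ Finset.range (2 ^ k), |cQ k j| ^ p ≤ 20 ^ p / (1 - 2 ^ (1 - p)) := by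
  obtain ⟨k, rfl⟩ : ∃ k', k = k' + 1 := ⟨k - 1, by omega⟩
  have hr : (2:ℝ) ^ (1 - p) < 1 := rpow_lt_one_of_one_lt_of_neg one_lt_two (by linarith)
  have hcQ0 : |cQ (k + 1) 0| ^ p = 0 := by
    rw [cQ_eq_zero_of_mem (left_mem_dyadic (k + 1) 0) (by simpa using alphaPlus_zero), abs_zero,
      zero_rpow (by linarith)]
  rw [Finset.range_eq_Ico, Finset.sum_eq_sum_Ico_succ_bot (by positivity), hcQ0, zero_add]
  calc ∑ j ∈ Finset.Ico 1 (2 ^ (k + 1)), |cQ (k + 1) j| ^ p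
      ≤ ∑ j ∈ Finset.Ico 1 (2 ^ (k + 1)), (20 / 2 ^ Nat.log 2 j) ^ p := by
        refine Finset.sum_le_sum fun j hj => ?_
        have hj := Finset.mem_Ico.1 hj
        exact rpow_le_rpow (abs_nonneg _) (abs_cQ_le_div_two_pow_log hj.1 hj.2) (by linarith)
    _ = ∑ m ∈ Finset.range (k + 1), 20 ^ p * ((2:ℝ) ^ (1 - p)) ^ m := by
        rw [sum_Ico_one_two_pow_comp_log (fun m => (20 / 2 ^ m : ℝ) ^ p)]
        simp only [nsmul_eq_mul, Nat.cast_pow, Nat.cast_ofNat,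
          two_pow_mul_div_two_pow_rpow (by norm_num : (0:ℝ) ≤ 20)]
    _ ≤ 20 ^ p / (1 - 2 ^ (1 - p)) := by
        have hgeom := geom_sum_Ico_le_of_lt_one (m := 0) (n := k + 1) (by positivity) hr
        rw [pow_zero] at hgeom
        rw [← Finset.mul_sum, Finset.range_eq_Ico, ← mul_one_div]
        exact mul_le_mul_of_nonneg_left hgeom (by positivity)

/-- There is an absolute constant `C > 0` such that `|c_Q| ≤ C 2^i |Q|` for dyadic `Q`
of generation `k > i` contained in `[2^{-(i+1)}, 2^{-i}]`, and consequently for every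
`p > 1`, `Σ_{Q ∈ D^k} |c_Q|^p ≤ C^p / (1 - 2^{1-p})` uniformly in `k`. -/
theorem stmt8 : ∃ C : ℝ, 0 < C ∧
    (∀ k i j : ℕ, i < k →
      dyadic k j ⊆ Set.Icc ((2:ℝ) ^ (-(i : ℤ) - 1)) ((2:ℝ) ^ (-(i : ℤ))) →
      |cQ k j| ≤ C * 2 ^ i * 2 ^ (-(k : ℤ))) ∧
    (∀ p : ℝ, 1 < p → ∀ k : ℕ, 1 ≤ k →
      ∑ j ∈ Finset.range (2 ^ k), |cQ k j| ^ p ≤ C ^ p / (1 - 2 ^ (1 - p))) := by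
  refine ⟨40, by norm_num, fun k i j => abs_cQ_le, fun p hp k hk => ?_⟩
  have hr : (2:ℝ) ^ (1 - p) < 1 := rpow_lt_one_of_one_lt_of_neg one_lt_two (by linarith)
  refine (sum_abs_cQ_rpow_le hp hk).trans ?_
  gcongr
  norm_num
end
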